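/- arXiv:1507.01308 — 2 statements merged into one kernel-verified Lean document; each statement's English description precedes it below -/
import Mathlib

section
/- Let n, m1, m2 be positive integers with n > 2(m1 + m2). Then for Lebesgue-almost all pairs (D, E) ∈ ℂ^{n×m1} × ℂ^{n×m2}, the following holds: for every x0 ∈ ℂ^{m1} with x0 ≠ 0, every y0 ∈ ℂ^{m2} with y0 ≠ 0, and every pair (x, y) ∈ ℂ^{m1} × ℂ^{m2} satisfying (D x) ⊛ (E y) = (D x0) ⊛ (E y0), there exists a nonzero σ ∈ ℂ with x = σ x0 and y = σ⁻¹ y0. (Strong identifiability of blind deconvolution with subspace constraints.) -/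
open MeasureTheory Filter

/-- Circular convolution of two vectors in `ℂ^n` indexed by `ZMod n`. -/
noncomputable def cconv {n : ℕ} [NeZero n] (u v : ZMod n → ℂ) : ZMod n → ℂ :=
  fun k => ∑ j : ZMod n, u j * v (k - j)

/-- Matrix-vector multiplication `D x` for `D ∈ ℂ^{n×m}`. -/
noncomputable def mApply {n m : ℕ} [NeZero n] (D : ZMod n → Fin m → ℂ) (x : Fin m → ℂ) :
    ZMod n → ℂ :=
  fun k => ∑ i, D k i * x i

/-!
The DFT along `ZMod n` turns circular convolution into pointwise multiplication: with `a_k`, `b_k`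
the rows of the transformed `D`, `E`, the hypothesis reads `a_kᵀ M b_k = 0` for every frequency `k`,
where `M = x yᵀ - x₀ y₀ᵀ`. Once `M = 0`, uniqueness of a rank-one factorisation up to scaling gives
`σ`. So it suffices that, for almost every `(a, b)`, no nonzero `M` of this form annihilates all the
rows. Such `M` range over a family of real dimension `4 (m1 + m2) < 2 n`, and for fixed `M` each
equation `a_kᵀ M b_k = 0` can be solved for one complex coordinate (of `a_k` if `M b_k ≠ 0`, of
`b_k` otherwise). Hence the bad set is covered by finitely many `C¹` images of spaces of real
dimension `4 (m1 + m2) + 2 n (m1 + m2) - 2 n < 2 n (m1 + m2)`; their Hausdorff dimension is too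
small to carry Lebesgue measure.
-/

open Matrix Module Function Set

section Fourier
variable {n : ℕ} [NeZero n]

theorem ZMod.dft_cconv (u v : ZMod n → ℂ) (k : ZMod n) :
    ZMod.dft (cconv u v) k = ZMod.dft u k * ZMod.dft v k := by
  simp only [ZMod.dft_apply, cconv, smul_eq_mul]
  rw [Finset.sum_mul_sum]
  simp only [Finset.mul_sum]
  rw [Finset.sum_comm]
  refine Finset.sum_congr rfl fun j _ => Fintype.sum_equiv (Equiv.subRight j) _ _ fun t => ?_
  rw [Equiv.subRight_apply, mul_mul_mul_comm, ← AddChar.map_add_eq_mul]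
  congr 2
  ring

theorem ZMod.dft_mApply {m : ℕ} (D : ZMod n → Fin m → ℂ) (x : Fin m → ℂ) (k : ZMod n) :
    ZMod.dft (mApply D x) k = ZMod.dft D k ⬝ᵥ x := by
  simp only [ZMod.dft_apply, mApply, dotProduct, Finset.sum_apply, Pi.smul_apply, smul_eq_mul,
    Finset.mul_sum, Finset.sum_mul]
  rw [Finset.sum_comm]
  simp only [mul_assoc]

end Fourier

theorem exists_smul_of_vecMulVec_eq {ι κ 𝕜 : Type*} [Field 𝕜] {x x₀ : ι → 𝕜} {y y₀ : κ → 𝕜}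
    (hx₀ : x₀ ≠ 0) (hy₀ : y₀ ≠ 0) (h : vecMulVec x y = vecMulVec x₀ y₀) :
    ∃ σ : 𝕜, σ ≠ 0 ∧ x = σ • x₀ ∧ y = σ⁻¹ • y₀ := by
  have hxy (i : ι) (j : κ) : x i * y j = x₀ i * y₀ j := by
    simpa only [vecMulVec_apply] using congrFun (congrFun h i) j
  obtain ⟨i₀, hi₀⟩ := Function.ne_iff.1 hx₀
  obtain ⟨j₀, hj₀⟩ := Function.ne_iff.1 hy₀
  have hx : x i₀ ≠ 0 := left_ne_zero_of_mul (hxy i₀ j₀ ▸ mul_ne_zero hi₀ hj₀)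
  have hy : y j₀ ≠ 0 := right_ne_zero_of_mul (hxy i₀ j₀ ▸ mul_ne_zero hi₀ hj₀)
  refine ⟨y₀ j₀ / y j₀, div_ne_zero hj₀ hy, funext fun i => ?_, funext fun j => ?_⟩
  · simp only [Pi.smul_apply, smul_eq_mul]
    field_simp
    linear_combination hxy i j₀
  · have : x i₀ * (y j * y₀ j₀ - y j₀ * y₀ j) = 0 := by
      linear_combination y₀ j₀ * hxy i₀ j - y₀ j * hxy i₀ j₀
    rw [Pi.smul_apply, smul_eq_mul, inv_div, div_mul_eq_mul_div, eq_div_iff hj₀]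
    linear_combination (mul_eq_zero.1 this).resolve_left hx

section HyperplaneProj
variable {ι 𝕜 : Type*} [Fintype ι] [DecidableEq ι] [Field 𝕜]

def hyperplaneProj (c : ι → 𝕜) (i : ι) (v : ι → 𝕜) : ι → 𝕜 :=
  v - ((c ⬝ᵥ v) / c i) • Pi.single i 1

theorem hyperplaneProj_update_zero {c v : ι → 𝕜} {i : ι} (hc : c i ≠ 0) (hv : c ⬝ᵥ v = 0) :
    hyperplaneProj c i (update v i 0) = v := by
  have hupd : update v i 0 = v - v i • Pi.single i 1 := by
    ext j; rcases eq_or_ne j i with rfl | hj <;> simp [*]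
  rw [hupd, hyperplaneProj, dotProduct_sub, dotProduct_smul, dotProduct_single, hv, smul_eq_mul,
    mul_one, zero_sub, neg_div, mul_div_cancel_right₀ _ hc, neg_smul, sub_neg_eq_add,
    sub_add_cancel]

end HyperplaneProj

theorem ContDiffAt.hyperplaneProj {ι E : Type*} [Fintype ι] [DecidableEq ι]
    [NormedAddCommGroup E] [NormedSpace ℝ E] {c v : E → ι → ℂ} {i : ι} {z : E}
    (hc : ContDiffAt ℝ 1 c z) (hv : ContDiffAt ℝ 1 v z) (hci : c z i ≠ 0) :
    ContDiffAt ℝ 1 (fun z => hyperplaneProj (c z) i (v z)) z := by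
  have hc' := contDiffAt_pi.1 hc
  have hv' := contDiffAt_pi.1 hv
  simp only [_root_.hyperplaneProj, dotProduct, div_eq_mul_inv]
  exact hv.sub ((((ContDiffAt.sum fun j _ => (hc' j).mul (hv' j)).mul
    ((hc' i).inv hci)).smul contDiffAt_const))

section QuadricChart
variable {ι κ : Type*} [DecidableEq ι] [DecidableEq κ]

def eraseSolvedCoord : ι ⊕ ι × κ → (ι → ℂ) × (κ → ℂ) → (ι → ℂ) × (κ → ℂ)
  | .inl i, ab => (update ab.1 i 0, ab.2)
  | .inr (_, j), ab => (ab.1, update ab.2 j 0)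

noncomputable def solvedCoord : ι ⊕ ι × κ → (ι → ℂ) × (κ → ℂ) →ₗ[ℂ] ℂ
  | .inl i => LinearMap.proj i ∘ₗ LinearMap.fst ℂ _ _
  | .inr (_, j) => LinearMap.proj j ∘ₗ LinearMap.snd ℂ _ _

theorem solvedCoord_eraseSolvedCoord (t : ι ⊕ ι × κ) (ab : (ι → ℂ) × (κ → ℂ)) :
    solvedCoord t (eraseSolvedCoord t ab) = 0 := by
  rcases t with i | ⟨i, j⟩ <;> simp [solvedCoord, eraseSolvedCoord]

theorem solvedCoord_surjective (t : ι ⊕ ι × κ) : Surjective (solvedCoord t) := by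
  rcases t with i | ⟨i, j⟩
  · exact fun c => ⟨(Pi.single i c, 0), by simp [solvedCoord]⟩
  · exact fun c => ⟨(0, Pi.single j c), by simp [solvedCoord]⟩

variable [Fintype ι] [Fintype κ]

-- Once `M ≠ 0`, these charts cover the quadric `{(a, b) | a ⬝ᵥ (M *ᵥ b) = 0}`: the `inl i` ones
-- where `(M *ᵥ b) i ≠ 0`, and an `inr (i, j)` one with `M i j ≠ 0` where `M *ᵥ b = 0`.
noncomputable def quadricChart (M : Matrix ι κ ℂ) :
    ι ⊕ ι × κ → (ι → ℂ) × (κ → ℂ) → (ι → ℂ) × (κ → ℂ)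
  | .inl i, ab => (hyperplaneProj (M *ᵥ ab.2) i ab.1, ab.2)
  | .inr (i, j), ab => (ab.1, hyperplaneProj (M i) j ab.2)

def QuadricChartRegular (M : Matrix ι κ ℂ) : ι ⊕ ι × κ → (ι → ℂ) × (κ → ℂ) → Prop
  | .inl i, ab => (M *ᵥ ab.2) i ≠ 0
  | .inr (i, j), _ => M i j ≠ 0

theorem exists_quadricChart_eraseSolvedCoord {M : Matrix ι κ ℂ} {i₀ : ι} {j₀ : κ} (hM : M i₀ j₀ ≠ 0)
    {a : ι → ℂ} {b : κ → ℂ} (h : a ⬝ᵥ (M *ᵥ b) = 0) :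
    ∃ t, QuadricChartRegular M t (eraseSolvedCoord t (a, b)) ∧
      quadricChart M t (eraseSolvedCoord t (a, b)) = (a, b) := by
  by_cases hMb : M *ᵥ b = 0
  · refine ⟨.inr (i₀, j₀), hM, ?_⟩
    have : M i₀ ⬝ᵥ b = 0 := congrFun hMb i₀
    simp only [eraseSolvedCoord, quadricChart, hyperplaneProj_update_zero hM this]
  · obtain ⟨i, hi⟩ := Function.ne_iff.1 hMb
    refine ⟨.inl i, hi, ?_⟩
    have : (M *ᵥ b) ⬝ᵥ a = 0 := by rwa [dotProduct_comm]
    simp only [eraseSolvedCoord, quadricChart, hyperplaneProj_update_zero hi this]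

theorem contDiffAt_quadricChart (t : ι ⊕ ι × κ) {M : ι → κ → ℂ} {ab : (ι → ℂ) × (κ → ℂ)}
    (h : QuadricChartRegular M t ab) :
    ContDiffAt ℝ 1 (fun q : (ι → κ → ℂ) × (ι → ℂ) × (κ → ℂ) => quadricChart q.1 t q.2)
      (M, ab) := by
  rcases t with i | ⟨i, j⟩
  · have hMb : ContDiff ℝ 1 fun q : (ι → κ → ℂ) × (ι → ℂ) × (κ → ℂ) => q.1 *ᵥ q.2.2 := by
      unfold mulVec dotProduct
      fun_prop
    exact (hMb.contDiffAt.hyperplaneProj (z := (M, ab)) contDiffAt_snd.fst h).prodMk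
      contDiffAt_snd.snd
  · exact contDiffAt_snd.fst.prodMk
      ((contDiffAt_pi.1 contDiffAt_fst i).hyperplaneProj (z := (M, ab)) contDiffAt_snd.snd h)

end QuadricChart

theorem addHaar_image_eq_zero_of_finrank_lt {E F : Type*} [NormedAddCommGroup E]
    [NormedSpace ℝ E] [FiniteDimensional ℝ E] [NormedAddCommGroup F] [NormedSpace ℝ F]
    [FiniteDimensional ℝ F] [MeasurableSpace F] [BorelSpace F] (μ : Measure F)
    [μ.IsAddHaarMeasure] {f : E → F} {s : Set E} (hf : ∀ x ∈ s, ContDiffAt ℝ 1 f x)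
    (hEF : finrank ℝ E < finrank ℝ F) : μ (f '' s) = 0 := by
  have hdim : dimH (f '' s) ≤ finrank ℝ E := calc
    dimH (f '' s) ≤ dimH s := dimH_image_le_of_locally_lipschitzOn fun x hx => by
        obtain ⟨C, t, ht, hC⟩ := (hf x hx).exists_lipschitzOnWith
        exact ⟨C, t, nhdsWithin_le_nhds ht, hC⟩
    _ ≤ dimH (univ : Set E) := dimH_mono (subset_univ s)
    _ = finrank ℝ E := Real.dimH_univ_eq_finrank E
  refine measure_zero_of_dimH_lt (d := finrank ℝ F) ?_ (hdim.trans_lt (by exact_mod_cast hEF))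
  exact_mod_cast Measure.absolutelyContinuous_isAddHaarMeasure μ μH[finrank ℝ F]

section AnnihilatedSet
variable {K ι κ P : Type*}

def annihilatedSet [Fintype ι] [Fintype κ] (M : P → ι → κ → ℂ) :
    Set ((K → ι → ℂ) × (K → κ → ℂ)) :=
  {R | ∃ p, M p ≠ 0 ∧ ∀ k, R.1 k ⬝ᵥ (M p *ᵥ R.2 k) = 0}

noncomputable def solvedCoords (τ : K → ι ⊕ ι × κ) :
    (K → ι → ℂ) × (K → κ → ℂ) →ₗ[ℂ] K → ℂ :=
  LinearMap.pi fun k => solvedCoord (τ k) ∘ₗ (LinearMap.proj k).prodMap (LinearMap.proj k)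

noncomputable def chartDomain (τ : K → ι ⊕ ι × κ) : Submodule ℝ ((K → ι → ℂ) × (K → κ → ℂ)) :=
  LinearMap.ker ((solvedCoords τ).restrictScalars ℝ)

theorem solvedCoords_surjective [DecidableEq ι] [DecidableEq κ] (τ : K → ι ⊕ ι × κ) :
    Surjective (solvedCoords τ) := by
  intro c
  choose ab hab using fun k => solvedCoord_surjective (τ k) (c k)
  exact ⟨(fun k => (ab k).1, fun k => (ab k).2), funext hab⟩

theorem finrank_prod_chartDomain_lt [Fintype K] [Fintype ι] [Fintype κ] [DecidableEq ι]
    [DecidableEq κ] [AddCommGroup P] [Module ℝ P] [FiniteDimensional ℝ P] (τ : K → ι ⊕ ι × κ)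
    (hP : finrank ℝ P < 2 * Fintype.card K) :
    finrank ℝ (P × chartDomain τ) < finrank ℝ ((K → ι → ℂ) × (K → κ → ℂ)) := by
  have h := LinearMap.finrank_range_add_finrank_ker ((solvedCoords τ).restrictScalars ℝ)
  rw [(LinearMap.range_eq_top (f := (solvedCoords τ).restrictScalars ℝ)).2
    (solvedCoords_surjective τ), finrank_top] at h
  have hK : finrank ℝ (K → ℂ) = 2 * Fintype.card K := by
    simp [Module.finrank_pi_fintype, Complex.finrank_real_complex, mul_comm]
  rw [finrank_prod, chartDomain]
  omega

noncomputable def annihilatedSetChart [Fintype ι] [Fintype κ] [DecidableEq ι] [DecidableEq κ]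
    (M : P → ι → κ → ℂ) (τ : K → ι ⊕ ι × κ) (z : P × (K → ι → ℂ) × (K → κ → ℂ)) :
    (K → ι → ℂ) × (K → κ → ℂ) :=
  (fun k => (quadricChart (M z.1) (τ k) (z.2.1 k, z.2.2 k)).1,
    fun k => (quadricChart (M z.1) (τ k) (z.2.1 k, z.2.2 k)).2)

def chartRegularSet [Fintype ι] [Fintype κ] (M : P → ι → κ → ℂ) (τ : K → ι ⊕ ι × κ) :
    Set (P × (K → ι → ℂ) × (K → κ → ℂ)) :=
  {z | ∀ k, QuadricChartRegular (M z.1) (τ k) (z.2.1 k, z.2.2 k)}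

theorem contDiffAt_annihilatedSetChart [Fintype K] [Fintype ι] [Fintype κ] [DecidableEq ι]
    [DecidableEq κ] [NormedAddCommGroup P] [NormedSpace ℝ P] {M : P → ι → κ → ℂ}
    (hM : ContDiff ℝ 1 M)
    (τ : K → ι ⊕ ι × κ) {z : P × (K → ι → ℂ) × (K → κ → ℂ)} (hz : z ∈ chartRegularSet M τ) :
    ContDiffAt ℝ 1 (annihilatedSetChart M τ) z := by
  have hrow (k : K) : ContDiffAt ℝ 1
      (fun z : P × (K → ι → ℂ) × (K → κ → ℂ) => quadricChart (M z.1) (τ k) (z.2.1 k, z.2.2 k))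
      z := by
    have hin : ContDiffAt ℝ 1
        (fun z : P × (K → ι → ℂ) × (K → κ → ℂ) => (M z.1, (z.2.1 k, z.2.2 k))) z :=
      (hM.contDiffAt.comp z contDiffAt_fst).prodMk (by fun_prop)
    exact (contDiffAt_quadricChart (τ k) (hz k)).comp z hin
  exact (contDiffAt_pi.2 fun k => (hrow k).fst).prodMk (contDiffAt_pi.2 fun k => (hrow k).snd)

theorem annihilatedSet_subset_iUnion_image [Fintype ι] [Fintype κ] [DecidableEq ι]
    [DecidableEq κ] (M : P → ι → κ → ℂ) :
    (annihilatedSet M : Set ((K → ι → ℂ) × (K → κ → ℂ))) ⊆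
      ⋃ τ : K → ι ⊕ ι × κ, (annihilatedSetChart M τ ∘ Prod.map id (chartDomain τ).subtype) ''
        (Prod.map id (chartDomain τ).subtype ⁻¹' chartRegularSet M τ) := by
  rintro R ⟨p, hp, hR⟩
  obtain ⟨i₀, hi₀⟩ := Function.ne_iff.1 hp
  obtain ⟨j₀, hj₀⟩ := Function.ne_iff.1 hi₀
  choose τ hτ using fun k => exists_quadricChart_eraseSolvedCoord hj₀ (hR k)
  let R' : (K → ι → ℂ) × (K → κ → ℂ) :=
    (fun k => (eraseSolvedCoord (τ k) (R.1 k, R.2 k)).1,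
      fun k => (eraseSolvedCoord (τ k) (R.1 k, R.2 k)).2)
  have hR' : R' ∈ chartDomain τ :=
    funext fun k => solvedCoord_eraseSolvedCoord (τ k) (R.1 k, R.2 k)
  refine mem_iUnion.2 ⟨τ, (p, ⟨R', hR'⟩), fun k => (hτ k).1, ?_⟩
  exact Prod.ext (funext fun k => congrArg Prod.fst (hτ k).2)
    (funext fun k => congrArg Prod.snd (hτ k).2)

theorem addHaar_annihilatedSet_eq_zero [Fintype K] [Fintype ι] [Fintype κ] [DecidableEq ι]
    [DecidableEq κ] [NormedAddCommGroup P] [NormedSpace ℝ P] [FiniteDimensional ℝ P]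
    (μ : Measure ((K → ι → ℂ) × (K → κ → ℂ))) [μ.IsAddHaarMeasure] {M : P → ι → κ → ℂ}
    (hM : ContDiff ℝ 1 M) (hP : finrank ℝ P < 2 * Fintype.card K) :
    μ (annihilatedSet M) = 0 :=
  measure_mono_null (annihilatedSet_subset_iUnion_image M) <| measure_iUnion_null fun τ =>
    addHaar_image_eq_zero_of_finrank_lt μ
      (fun _ hz => (contDiffAt_annihilatedSetChart hM τ hz).comp _
        (contDiff_id.prodMap (chartDomain τ).subtypeL.contDiff).contDiffAt)
      (finrank_prod_chartDomain_lt τ hP)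

end AnnihilatedSet

instance {K ι : Type*} [Fintype K] [Fintype ι] :
    (volume : Measure (K → ι → ℂ)).IsAddHaarMeasure :=
  Measure.pi.isAddHaarMeasure _

instance {K ι κ : Type*} [Fintype K] [Fintype ι] [Fintype κ] :
    (volume : Measure ((K → ι → ℂ) × (K → κ → ℂ))).IsAddHaarMeasure :=
  Measure.prod.instIsAddHaarMeasure _ _

theorem strong_identifiability_subspace_general (n m1 m2 : ℕ) [NeZero n]
    (hn : 2 * (m1 + m2) < n) :
    ∀ᵐ DE : (ZMod n → Fin m1 → ℂ) × (ZMod n → Fin m2 → ℂ),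
      ∀ x0 : Fin m1 → ℂ, x0 ≠ 0 → ∀ y0 : Fin m2 → ℂ, y0 ≠ 0 →
      ∀ x : Fin m1 → ℂ, ∀ y : Fin m2 → ℂ,
        cconv (mApply DE.1 x) (mApply DE.2 y) = cconv (mApply DE.1 x0) (mApply DE.2 y0) →
        ∃ σ : ℂ, σ ≠ 0 ∧ x = σ • x0 ∧ y = σ⁻¹ • y0 := by
  let F : ((ZMod n → Fin m1 → ℂ) × (ZMod n → Fin m2 → ℂ)) ≃ₗ[ℂ] _ :=
    ZMod.dft.prodCongr ZMod.dft
  let M (p : ((Fin m1 → ℂ) × (Fin m2 → ℂ)) × (Fin m1 → ℂ) × (Fin m2 → ℂ)) :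
      Fin m1 → Fin m2 → ℂ :=
    vecMulVec p.1.1 p.1.2 - vecMulVec p.2.1 p.2.2
  have hM : ContDiff ℝ 1 M := by
    refine contDiff_pi.2 fun i => contDiff_pi.2 fun j => ?_
    show ContDiff ℝ 1 fun p : ((Fin m1 → ℂ) × (Fin m2 → ℂ)) × (Fin m1 → ℂ) × (Fin m2 → ℂ) =>
      p.1.1 i * p.1.2 j - p.2.1 i * p.2.2 j
    fun_prop
  have hP : finrank ℝ (((Fin m1 → ℂ) × (Fin m2 → ℂ)) × (Fin m1 → ℂ) × (Fin m2 → ℂ)) <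
      2 * Fintype.card (ZMod n) := by
    simp [Module.finrank_pi_fintype, Complex.finrank_real_complex, ZMod.card]
    omega
  have hnull : volume ((F.restrictScalars ℝ) ⁻¹' annihilatedSet M) = 0 := by
    rw [Measure.addHaar_preimage_linearEquiv, addHaar_annihilatedSet_eq_zero volume hM hP, mul_zero]
  filter_upwards [measure_eq_zero_iff_ae_notMem.1 hnull] with DE hDE x₀ hx₀ y₀ hy₀ x y hconv
  have hfreq (k : ZMod n) :
      ZMod.dft DE.1 k ⬝ᵥ (M ((x, y), (x₀, y₀)) *ᵥ ZMod.dft DE.2 k) = 0 := by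
    have h := congrArg (ZMod.dft · k) hconv
    simp only [ZMod.dft_cconv, ZMod.dft_mApply] at h
    simp only [M, dotProduct_mulVec, vecMul_sub, vecMul_vecMulVec, sub_dotProduct,
      smul_dotProduct, smul_eq_mul, dotProduct_comm y, dotProduct_comm y₀]
    exact sub_eq_zero.2 h
  have hM₀ : M ((x, y), (x₀, y₀)) = 0 := not_not.1 fun h => hDE ⟨_, h, hfreq⟩
  exact exists_smul_of_vecMulVec_eq hx₀ hy₀ (sub_eq_zero.1 hM₀)

/-- Strong identifiability of blind deconvolution with subspace constraints:
if `n > 2(m1 + m2)`, then for Lebesgue-almost all `(D, E)`, all nonzero pairs `(x0, y0)`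
are identifiable up to scaling. -/
theorem strong_identifiability_subspace (n m1 m2 : ℕ) [NeZero n]
    (hm1 : 0 < m1) (hm2 : 0 < m2) (hn : 2 * (m1 + m2) < n) :
    ∀ᵐ DE : (ZMod n → Fin m1 → ℂ) × (ZMod n → Fin m2 → ℂ),
      ∀ x0 : Fin m1 → ℂ, x0 ≠ 0 → ∀ y0 : Fin m2 → ℂ, y0 ≠ 0 →
      ∀ x : Fin m1 → ℂ, ∀ y : Fin m2 → ℂ,
        cconv (mApply DE.1 x) (mApply DE.2 y) = cconv (mApply DE.1 x0) (mApply DE.2 y0) →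
        ∃ σ : ℂ, σ ≠ 0 ∧ x = σ • x0 ∧ y = σ⁻¹ • y0 :=
  strong_identifiability_subspace_general n m1 m2 hn
end

section
/- Let m1, m2, s1, s2 be positive integers with s1 ≤ m1 and s2 ≤ m2, and let Ω_B = { x yᵀ : x ∈ ℂ^{m1}, y ∈ ℂ^{m2}, ‖x‖₀ ≤ s1, ‖y‖₀ ≤ s2, ‖x yᵀ‖_F ≤ 1 } ⊆ ℂ^{m1×m2}. Then the upper Minkowski dimension of Ω_B (with respect to the Frobenius norm) is at most 2(s1 + s2). -/
open MeasureTheory Filter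

/-- Covering number: the minimal number of closed balls of radius `ρ`
(with arbitrary centers) needed to cover `Ω`. -/
noncomputable def coveringNumber {X : Type*} [PseudoMetricSpace X] (Ω : Set X) (ρ : ℝ) : ℕ :=
  sInf {k : ℕ | ∃ C : Finset X, C.card = k ∧ Ω ⊆ ⋃ c ∈ C, Metric.closedBall c ρ}

/-- Upper Minkowski dimension: `limsup_{ρ → 0⁺} log N_Ω(ρ) / log (1/ρ)`. -/
noncomputable def upperMinkowskiDim {X : Type*} [PseudoMetricSpace X] (Ω : Set X) : ℝ :=
  Filter.limsup (fun ρ : ℝ => Real.log (coveringNumber Ω ρ) / Real.log (1 / ρ))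
    (nhdsWithin 0 (Set.Ioi 0))

/-- `‖x‖₀`, the number of nonzero entries of a vector. -/
noncomputable def l0 {m : ℕ} (x : Fin m → ℂ) : ℕ := (Function.support x).ncard

/-! Each `x yᵀ` in the set can be rescaled to `x' y'ᵀ`, without enlarging the supports, so that
all entries of `x'` and `y'` have modulus at most `1`. Hence the set lies in a finite union, over supports `S`, `T` with
`|S| ≤ s1`, `|T| ≤ s2`, of images of a ball of `ℂ^S × ℂ^T`, a real space of dimension
`2(|S| + |T|)`, under the smooth map `(a, b) ↦ a bᵀ`. A locally Lipschitz image of a bounded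
set of a `d`-dimensional real space is covered by `O(ρ^{-d})` balls of radius `ρ` (push a cubical
grid through the map), and covering numbers of a finite union add up. -/

open Asymptotics Topology Set
open Metric hiding coveringNumber

section CoveringNumber

variable {X Y : Type*} [PseudoMetricSpace X] [PseudoMetricSpace Y]

theorem coveringNumber_le_card {s : Set X} {ρ : ℝ} {C : Finset X}
    (hC : s ⊆ ⋃ c ∈ C, closedBall c ρ) : coveringNumber s ρ ≤ C.card :=
  Nat.sInf_le ⟨C, rfl, hC⟩

theorem TotallyBounded.exists_finset_card_eq_coveringNumber {s : Set X} (hs : TotallyBounded s)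
    {ρ : ℝ} (hρ : 0 < ρ) :
    ∃ C : Finset X, C.card = coveringNumber s ρ ∧ s ⊆ ⋃ c ∈ C, closedBall c ρ := by
  obtain ⟨t, ht, hst⟩ := Metric.totallyBounded_iff.1 hs ρ hρ
  have hcover : s ⊆ ⋃ c ∈ ht.toFinset, closedBall c ρ := fun x hx => by
    obtain ⟨y, hy, hxy⟩ := mem_iUnion₂.1 (hst hx)
    exact mem_iUnion₂.2 ⟨y, ht.mem_toFinset.2 hy, ball_subset_closedBall hxy⟩
  exact Nat.sInf_mem (s := {k | ∃ C : Finset X, C.card = k ∧ s ⊆ ⋃ c ∈ C, closedBall c ρ})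
    ⟨_, _, rfl, hcover⟩

theorem coveringNumber_mono {s t : Set X} (hst : s ⊆ t) (ht : TotallyBounded t) {ρ : ℝ}
    (hρ : 0 < ρ) : coveringNumber s ρ ≤ coveringNumber t ρ := by
  obtain ⟨C, hC, htC⟩ := ht.exists_finset_card_eq_coveringNumber hρ
  exact hC ▸ coveringNumber_le_card (hst.trans htC)

theorem coveringNumber_iUnion_le {ι : Type*} [Fintype ι] {s : ι → Set X}
    (hs : ∀ i, TotallyBounded (s i)) {ρ : ℝ} (hρ : 0 < ρ) :
    coveringNumber (⋃ i, s i) ρ ≤ ∑ i, coveringNumber (s i) ρ := by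
  classical
  choose C hC hsC using fun i => (hs i).exists_finset_card_eq_coveringNumber hρ
  calc coveringNumber (⋃ i, s i) ρ ≤ (Finset.univ.biUnion C).card := by
        refine coveringNumber_le_card (iUnion_subset fun i => (hsC i).trans ?_)
        exact biUnion_subset_biUnion_left
          (Finset.coe_subset.2 (Finset.subset_biUnion_of_mem C (Finset.mem_univ i)))
    _ ≤ ∑ i, (C i).card := Finset.card_biUnion_le
    _ = ∑ i, coveringNumber (s i) ρ := by simp only [hC]

theorem exists_finset_subset_cover_two_mul {s : Set X} {ρ : ℝ} {C : Finset X}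
    (hC : s ⊆ ⋃ c ∈ C, closedBall c ρ) :
    ∃ D : Finset X, ↑D ⊆ s ∧ D.card ≤ C.card ∧ s ⊆ ⋃ c ∈ D, closedBall c (2 * ρ) := by
  classical
  let meets (c : X) : Prop := (closedBall c ρ ∩ s).Nonempty
  let pick (c : X) : X := if h : meets c then h.some else c
  refine ⟨(C.filter meets).image pick, ?_,
    Finset.card_image_le.trans (Finset.card_filter_le _ _), ?_⟩
  · intro x hx
    obtain ⟨c, hc, rfl⟩ := Finset.mem_image.1 hx
    have hmeets : meets c := (Finset.mem_filter.1 hc).2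
    simpa [pick, hmeets] using hmeets.some_mem.2
  · intro x hx
    obtain ⟨c, hc, hxc⟩ := mem_iUnion₂.1 (hC hx)
    have hmeets : meets c := ⟨x, hxc, hx⟩
    refine mem_iUnion₂.2 ⟨pick c, Finset.mem_image_of_mem _ (Finset.mem_filter.2 ⟨hc, hmeets⟩), ?_⟩
    have hpick : pick c ∈ closedBall c ρ := by simpa [pick, hmeets] using hmeets.some_mem.1
    rw [mem_closedBall] at hxc hpick ⊢
    linarith [dist_triangle_right x (pick c) c]

theorem coveringNumber_image_le {s : Set X} {f : X → Y} {K : NNReal} (hf : LipschitzOnWith K f s)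
    (hs : TotallyBounded s) {ρ : ℝ} (hρ : 0 < ρ) :
    coveringNumber (f '' s) (2 * K * ρ) ≤ coveringNumber s ρ := by
  classical
  obtain ⟨C, hC, hsC⟩ := hs.exists_finset_card_eq_coveringNumber hρ
  obtain ⟨D, hDs, hDC, hsD⟩ := exists_finset_subset_cover_two_mul hsC
  refine (coveringNumber_le_card (C := D.image f) ?_).trans (Finset.card_image_le.trans (hC ▸ hDC))
  rintro _ ⟨x, hx, rfl⟩
  obtain ⟨c, hc, hxc⟩ := mem_iUnion₂.1 (hsD hx)
  refine mem_iUnion₂.2 ⟨f c, Finset.mem_image_of_mem f hc, ?_⟩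
  rw [mem_closedBall] at hxc ⊢
  calc dist (f x) (f c) ≤ K * dist x c := hf.dist_le_mul x hx c (hDs hc)
    _ ≤ K * (2 * ρ) := by gcongr
    _ = 2 * K * ρ := by ring

end CoveringNumber

section IsBigO

variable {X Y : Type*} [PseudoMetricSpace X] [PseudoMetricSpace Y]

theorem isBigO_coveringNumber_of_subset {s t : Set X} {d : ℝ} (hst : s ⊆ t)
    (ht : TotallyBounded t)
    (h : (fun ρ => (coveringNumber t ρ : ℝ)) =O[𝓝[>] 0] fun ρ => ρ ^ (-d)) :
    (fun ρ => (coveringNumber s ρ : ℝ)) =O[𝓝[>] 0] fun ρ => ρ ^ (-d) := by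
  refine IsBigO.trans (IsBigO.of_bound 1 ?_) h
  filter_upwards [self_mem_nhdsWithin] with ρ hρ
  simpa using coveringNumber_mono hst ht hρ

theorem isBigO_coveringNumber_iUnion {ι : Type*} [Finite ι] {s : ι → Set X} {d : ℝ}
    (hs : ∀ i, TotallyBounded (s i))
    (h : ∀ i, (fun ρ => (coveringNumber (s i) ρ : ℝ)) =O[𝓝[>] 0] fun ρ => ρ ^ (-d)) :
    (fun ρ => (coveringNumber (⋃ i, s i) ρ : ℝ)) =O[𝓝[>] 0] fun ρ => ρ ^ (-d) := by
  have := Fintype.ofFinite ι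
  refine IsBigO.trans (IsBigO.of_bound 1 ?_) (IsBigO.fun_sum (s := Finset.univ) fun i _ => h i)
  filter_upwards [self_mem_nhdsWithin] with ρ hρ
  rw [one_mul, Real.norm_natCast, Real.norm_of_nonneg (by positivity)]
  exact_mod_cast coveringNumber_iUnion_le hs hρ

theorem isBigO_coveringNumber_image {s : Set X} {f : X → Y} {K : NNReal} {d : ℝ}
    (hf : LipschitzOnWith K f s) (hs : TotallyBounded s)
    (h : (fun ρ => (coveringNumber s ρ : ℝ)) =O[𝓝[>] 0] fun ρ => ρ ^ (-d)) :
    (fun ρ => (coveringNumber (f '' s) ρ : ℝ)) =O[𝓝[>] 0] fun ρ => ρ ^ (-d) := by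
  set c : ℝ := 2 * (K + 1)
  have hc : 0 < c := by positivity
  have hrescale : Tendsto (fun ρ => ρ / c) (𝓝[>] 0) (𝓝[>] 0) := by
    refine tendsto_nhdsWithin_iff.2 ⟨?_, ?_⟩
    · simpa using ((continuous_id.div_const c).tendsto 0).mono_left nhdsWithin_le_nhds
    · filter_upwards [self_mem_nhdsWithin] with ρ hρ using div_pos hρ hc
  have hle : ∀ ρ > 0, coveringNumber (f '' s) ρ ≤ coveringNumber s (ρ / c) := fun ρ hρ => by
    have := coveringNumber_image_le (hf.weaken (le_add_of_nonneg_right zero_le_one)) hs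
      (div_pos hρ hc)
    have hρc : 2 * ((K + 1 : NNReal) : ℝ) * (ρ / c) = ρ := by
      push_cast
      exact mul_div_cancel₀ ρ hc.ne'
    rwa [hρc] at this
  calc (fun ρ => (coveringNumber (f '' s) ρ : ℝ))
      =O[𝓝[>] 0] fun ρ => (coveringNumber s (ρ / c) : ℝ) := by
        refine IsBigO.of_bound 1 ?_
        filter_upwards [self_mem_nhdsWithin] with ρ hρ
        simpa using hle ρ hρ
    _ =O[𝓝[>] 0] fun ρ => (ρ / c) ^ (-d) := h.comp_tendsto hrescale
    _ =O[𝓝[>] 0] fun ρ => ρ ^ (-d) := by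
        refine IsBigO.of_bound (c ^ d) ?_
        filter_upwards [self_mem_nhdsWithin] with ρ (hρ : 0 < ρ)
        rw [Real.norm_of_nonneg (by positivity), Real.norm_of_nonneg (by positivity),
          Real.div_rpow hρ.le hc.le, Real.rpow_neg hc.le, div_inv_eq_mul, mul_comm]

theorem isBigO_rpow_neg_of_le {d d' : ℝ} (h : d' ≤ d) :
    (fun ρ : ℝ => ρ ^ (-d')) =O[𝓝[>] 0] fun ρ => ρ ^ (-d) := by
  refine IsBigO.of_bound 1 ?_
  filter_upwards [Ioc_mem_nhdsGT one_pos] with ρ ⟨hρ, hρ1⟩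
  rw [one_mul, Real.norm_of_nonneg (by positivity), Real.norm_of_nonneg (by positivity)]
  exact Real.rpow_le_rpow_of_exponent_ge hρ hρ1 (neg_le_neg h)

theorem log_natCast_le_of_le_mul_rpow_neg {N : ℕ} {K ρ d : ℝ} (hd : 0 ≤ d) (hρ : 0 < ρ)
    (hρ1 : ρ < 1) (hN : (N : ℝ) ≤ K * ρ ^ (-d)) :
    Real.log N ≤ Real.log (max K 1) + d * Real.log (1 / ρ) := by
  have hlog1 : 0 ≤ Real.log (1 / ρ) := Real.log_nonneg (one_le_one_div hρ hρ1.le)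
  rcases N.eq_zero_or_pos with h0 | h0
  · rw [h0, Nat.cast_zero, Real.log_zero]
    have := Real.log_nonneg (le_max_right K 1)
    positivity
  calc Real.log N ≤ Real.log (max K 1 * ρ ^ (-d)) := by
        refine Real.log_le_log (by exact_mod_cast h0) (hN.trans ?_)
        gcongr
        exact le_max_left K 1
    _ = Real.log (max K 1) + d * Real.log (1 / ρ) := by
        rw [Real.log_mul (by positivity) (by positivity), Real.log_rpow hρ, one_div,
          Real.log_inv]
        ring

theorem upperMinkowskiDim_le_of_isBigO {Ω : Set X} {d : ℝ} (hd : 0 ≤ d)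
    (h : (fun ρ => (coveringNumber Ω ρ : ℝ)) =O[𝓝[>] 0] fun ρ => ρ ^ (-d)) :
    upperMinkowskiDim Ω ≤ d := by
  obtain ⟨K, hK⟩ := h.bound
  set B := Real.log (max K 1)
  have hlog : Tendsto (fun ρ : ℝ => Real.log (1 / ρ)) (𝓝[>] 0) atTop := by
    simpa only [one_div, Function.comp_def] using
      Real.tendsto_log_atTop.comp tendsto_inv_nhdsGT_zero
  have hbound : Tendsto (fun ρ => B / Real.log (1 / ρ) + d) (𝓝[>] 0) (𝓝 d) := by
    simpa using (tendsto_const_nhds.div_atTop hlog).add_const d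
  have hlogN : ∀ᶠ ρ in 𝓝[>] 0, 0 < Real.log (1 / ρ) ∧
      Real.log (coveringNumber Ω ρ) ≤ B + d * Real.log (1 / ρ) := by
    filter_upwards [hK, Ioo_mem_nhdsGT one_pos] with ρ hρK ⟨hρ, hρ1⟩
    rw [Real.norm_natCast, Real.norm_of_nonneg (by positivity)] at hρK
    exact ⟨Real.log_pos (one_lt_one_div hρ hρ1),
      log_natCast_le_of_le_mul_rpow_neg hd hρ hρ1 hρK⟩
  refine (limsup_le_limsup ?_ ?_ hbound.isBoundedUnder_le).trans hbound.limsup_eq.le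
  · filter_upwards [hlogN] with ρ ⟨hlog1, hN⟩
    rw [div_le_iff₀ hlog1, add_mul, div_mul_cancel₀ _ hlog1.ne']
    linarith
  · refine isCoboundedUnder_le_of_eventually_le _ (x := 0) ?_
    filter_upwards [hlogN] with ρ hρ
    exact div_nonneg (Real.log_natCast_nonneg _) hρ.1.le

end IsBigO

theorem exists_int_mem_Icc_abs_sub_mul_le {r ε t : ℝ} (hε : 0 < ε) (ht : |t| ≤ r) :
    ∃ k ∈ Finset.Icc (-(⌈r / ε⌉₊ : ℤ)) ⌈r / ε⌉₊, |t - k * ε| ≤ ε := by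
  have hceil : r / ε ≤ ⌈r / ε⌉₊ := Nat.le_ceil _
  have htr : -r / ε ≤ t / ε ∧ t / ε ≤ r / ε :=
    ⟨div_le_div_of_nonneg_right (abs_le.1 ht).1 hε.le,
      div_le_div_of_nonneg_right (abs_le.1 ht).2 hε.le⟩
  refine ⟨⌊t / ε⌋, Finset.mem_Icc.2 ⟨?_, ?_⟩, ?_⟩
  · refine Int.le_floor.2 ?_
    push_cast
    rw [neg_div] at htr
    linarith
  · exact_mod_cast (Int.floor_le (t / ε)).trans (htr.2.trans hceil)
  · have hlo := Int.floor_le (t / ε)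
    have hhi := Int.lt_floor_add_one (t / ε)
    rw [le_div_iff₀ hε] at hlo
    rw [div_lt_iff₀ hε] at hhi
    rw [abs_le]
    constructor <;> nlinarith

theorem coveringNumber_closedBall_pi_le {ι : Type*} [Fintype ι] {r ρ : ℝ} (hr : 0 ≤ r)
    (hρ : 0 < ρ) :
    coveringNumber (closedBall (0 : ι → ℝ) r) ρ ≤ (2 * ⌈r / ρ⌉₊ + 1) ^ Fintype.card ι := by
  classical
  set N := ⌈r / ρ⌉₊
  set grid : Finset ℝ := (Finset.Icc (-(N : ℤ)) N).image fun k : ℤ => (k : ℝ) * ρ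
  have hgrid : grid.card ≤ 2 * N + 1 :=
    Finset.card_image_le.trans (by rw [Int.card_Icc]; omega)
  refine (coveringNumber_le_card (C := Fintype.piFinset fun _ : ι => grid) ?_).trans ?_
  · intro x hx
    rw [mem_closedBall_zero_iff, pi_norm_le_iff_of_nonneg hr] at hx
    choose k hk hxk using fun i => exists_int_mem_Icc_abs_sub_mul_le hρ (hx i)
    refine mem_iUnion₂.2 ⟨fun i => k i * ρ,
      Fintype.mem_piFinset.2 fun i => Finset.mem_image_of_mem _ (hk i),
      (dist_pi_le_iff hρ.le).2 fun i => ?_⟩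
    simpa [Real.dist_eq] using hxk i
  · rw [Fintype.card_piFinset, Finset.prod_const, Finset.card_univ]
    exact Nat.pow_le_pow_left hgrid _

theorem isBigO_coveringNumber_closedBall_pi {ι : Type*} [Fintype ι] {r : ℝ} (hr : 0 ≤ r) :
    (fun ρ => (coveringNumber (closedBall (0 : ι → ℝ) r) ρ : ℝ))
      =O[𝓝[>] 0] fun ρ => ρ ^ (-(Fintype.card ι : ℝ)) := by
  refine IsBigO.of_bound ((2 * r + 3) ^ Fintype.card ι) ?_
  filter_upwards [Ioc_mem_nhdsGT one_pos] with ρ ⟨hρ, hρ1⟩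
  rw [Real.norm_natCast, Real.norm_of_nonneg (by positivity), Real.rpow_neg hρ.le,
    Real.rpow_natCast, ← div_eq_mul_inv, ← div_pow]
  have hN : (2 * ⌈r / ρ⌉₊ + 1 : ℝ) ≤ (2 * r + 3) / ρ := by
    have := Nat.ceil_lt_add_one (div_nonneg hr hρ.le)
    rw [le_div_iff₀ hρ]
    calc (2 * ⌈r / ρ⌉₊ + 1) * ρ ≤ (2 * (r / ρ + 1) + 1) * ρ := by gcongr
      _ = 2 * r + 3 * ρ := by field_simp; ring
      _ ≤ 2 * r + 3 := by linarith
  calc (coveringNumber (closedBall (0 : ι → ℝ) r) ρ : ℝ)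
      ≤ ((2 * ⌈r / ρ⌉₊ + 1 : ℕ) : ℝ) ^ Fintype.card ι := by
        exact_mod_cast coveringNumber_closedBall_pi_le hr hρ
    _ ≤ ((2 * r + 3) / ρ) ^ Fintype.card ι := by
        gcongr
        push_cast
        exact hN

theorem isBigO_coveringNumber_image_of_locallyLipschitz {E X : Type*} [NormedAddCommGroup E]
    [NormedSpace ℝ E] [FiniteDimensional ℝ E] [PseudoMetricSpace X] {f : E → X}
    (hf : LocallyLipschitz f) {s : Set E} (hs : Bornology.IsBounded s) :
    (fun ρ => (coveringNumber (f '' s) ρ : ℝ))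
      =O[𝓝[>] 0] fun ρ => ρ ^ (-(Module.finrank ℝ E : ℝ)) := by
  set n := Module.finrank ℝ E
  let e : (Fin n → ℝ) ≃L[ℝ] E := ContinuousLinearEquiv.ofFinrankEq (Module.finrank_fin_fun ℝ)
  obtain ⟨R, hR, hsR⟩ := hs.subset_closedBall_lt 0 0
  set B := closedBall (0 : Fin n → ℝ) (‖(e.symm : E →L[ℝ] Fin n → ℝ)‖ * R)
  have hsB : f '' s ⊆ (f ∘ e) '' B := by
    rintro _ ⟨x, hx, rfl⟩
    refine ⟨e.symm x, ?_, by simp⟩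
    rw [mem_closedBall_zero_iff]
    exact (e.symm : E →L[ℝ] Fin n → ℝ).le_of_opNorm_le_of_le le_rfl
      (mem_closedBall_zero_iff.1 (hsR hx))
  have hB : IsCompact B := isCompact_closedBall 0 _
  have hfe : LocallyLipschitz (f ∘ e) := hf.comp e.lipschitz.locallyLipschitz
  obtain ⟨K, hK⟩ := hfe.locallyLipschitzOn.exists_lipschitzOnWith_of_compact hB
  refine isBigO_coveringNumber_of_subset hsB (hB.image hfe.continuous).totallyBounded ?_
  simpa using isBigO_coveringNumber_image hK hB.totallyBounded
    (isBigO_coveringNumber_closedBall_pi (by positivity))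

section SparseRankOne

variable {ι κ : Type*} [Fintype ι] [Fintype κ]

noncomputable def outerProductOn (S : Finset ι) (T : Finset κ) (ab : (S → ℂ) × (T → ℂ)) :
    EuclideanSpace ℂ (ι × κ) :=
  WithLp.toLp 2 fun p => Function.extend Subtype.val ab.1 0 p.1 *
    Function.extend Subtype.val ab.2 0 p.2

@[fun_prop]
theorem contDiff_extend_val_apply {α : Type*} (S : Finset α) (i : α) {n : WithTop ℕ∞} :
    ContDiff ℝ n fun a : S → ℂ => Function.extend Subtype.val a 0 i := by
  by_cases hi : i ∈ S
  · simpa [Subtype.val_injective.extend_apply _ _ (⟨i, hi⟩ : S)] using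
      contDiff_apply ℝ ℂ (⟨i, hi⟩ : S)
  · have hne : ¬∃ j : S, (j : α) = i := fun ⟨j, hj⟩ => hi (hj ▸ j.2)
    simp only [Function.extend_apply' _ _ _ hne, Pi.zero_apply]
    exact contDiff_const

theorem locallyLipschitz_outerProductOn (S : Finset ι) (T : Finset κ) :
    LocallyLipschitz (outerProductOn S T) :=
  ContDiff.locallyLipschitz (𝕂 := ℝ) (by unfold outerProductOn; fun_prop)

theorem extend_val_restrict {α : Type*} {S : Finset α} {x : α → ℂ} (hx : Function.support x ⊆ S) :
    Function.extend Subtype.val (fun i : S => x i) 0 = x := by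
  funext i
  by_cases hi : i ∈ S
  · exact Subtype.val_injective.extend_apply _ _ (⟨i, hi⟩ : S)
  · have hne : ¬∃ j : S, (j : α) = i := fun ⟨j, hj⟩ => hi (hj ▸ j.2)
    rw [Function.extend_apply' _ _ _ hne, Pi.zero_apply, eq_comm]
    exact Function.notMem_support.1 fun h => hi (hx h)

theorem exists_rankOne_factors_norm_le_one {x : ι → ℂ} {y : κ → ℂ} {M : EuclideanSpace ℂ (ι × κ)}
    (hM : ∀ p, M p = x p.1 * y p.2) (hM1 : ‖M‖ ≤ 1) :
    ∃ x' : ι → ℂ, ∃ y' : κ → ℂ, Function.support x' ⊆ Function.support x ∧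
      Function.support y' ⊆ Function.support y ∧ ‖x'‖ ≤ 1 ∧ ‖y'‖ ≤ 1 ∧
      ∀ p, M p = x' p.1 * y' p.2 := by
  by_cases hx : x = 0
  · refine ⟨0, 0, by simp, by simp, by simp, by simp, fun p => ?_⟩
    simp [hM p, hx]
  -- Divide `x` by an entry of largest modulus; `y'` then becomes a row of `M`.
  obtain ⟨i, hi⟩ := Function.ne_iff.1 hx
  have : Nonempty ι := ⟨i⟩
  obtain ⟨i₀, hi₀⟩ := Finite.exists_max fun i => ‖x i‖
  have hx₀ : x i₀ ≠ 0 := fun h =>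
    hi (norm_le_zero_iff.1 ((hi₀ i).trans_eq (by rw [h, norm_zero])))
  refine ⟨(x i₀)⁻¹ • x, x i₀ • y, Function.support_smul_subset_right _ _,
    Function.support_smul_subset_right _ _, ?_, ?_, fun p => ?_⟩
  · refine pi_norm_le_iff_of_nonneg zero_le_one |>.2 fun i => ?_
    rw [Pi.smul_apply, smul_eq_mul, norm_mul, norm_inv, inv_mul_le_one₀ (norm_pos_iff.2 hx₀)]
    exact hi₀ i
  · refine pi_norm_le_iff_of_nonneg zero_le_one |>.2 fun j => ?_
    rw [Pi.smul_apply, smul_eq_mul, ← hM (i₀, j)]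
    exact (PiLp.norm_apply_le M (i₀, j)).trans hM1
  · simp only [Pi.smul_apply, smul_eq_mul, hM p]
    field_simp

theorem isBigO_coveringNumber_outerProductOn (S : Finset ι) (T : Finset κ) :
    (fun ρ => (coveringNumber (outerProductOn S T '' closedBall 0 1) ρ : ℝ))
      =O[𝓝[>] 0] fun ρ => ρ ^ (-(2 * (S.card + T.card) : ℝ)) := by
  have hrank : Module.finrank ℝ ((S → ℂ) × (T → ℂ)) = 2 * (S.card + T.card) := by
    simp only [Module.finrank_prod, Module.finrank_pi_fintype, Complex.finrank_real_complex,
      Finset.sum_const, Finset.card_univ, Fintype.card_coe, smul_eq_mul]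
    ring
  simpa [hrank] using isBigO_coveringNumber_image_of_locallyLipschitz
    (locallyLipschitz_outerProductOn S T) isBounded_closedBall

theorem isCompact_image_outerProductOn (S : Finset ι) (T : Finset κ) :
    IsCompact (outerProductOn S T '' closedBall 0 1) :=
  (isCompact_closedBall 0 1).image (locallyLipschitz_outerProductOn S T).continuous

end SparseRankOne

theorem sparseRankOne_subset_iUnion {m1 m2 : ℕ} (s1 s2 : ℕ) :
    {M : EuclideanSpace ℂ (Fin m1 × Fin m2) |
        ∃ x : Fin m1 → ℂ, ∃ y : Fin m2 → ℂ, l0 x ≤ s1 ∧ l0 y ≤ s2 ∧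
          (∀ p : Fin m1 × Fin m2, M p = x p.1 * y p.2) ∧ ‖M‖ ≤ 1} ⊆
      ⋃ ST : {S : Finset (Fin m1) // S.card ≤ s1} × {T : Finset (Fin m2) // T.card ≤ s2},
        outerProductOn ST.1.1 ST.2.1 '' closedBall 0 1 := by
  classical
  rintro M ⟨x, y, hx, hy, hM, hM1⟩
  obtain ⟨x', y', hsx, hsy, hx', hy', hM'⟩ := exists_rankOne_factors_norm_le_one hM hM1
  set S := (Function.support x).toFinset
  set T := (Function.support y).toFinset
  have hS : S.card ≤ s1 := (Set.ncard_eq_toFinset_card' _).symm.trans_le hx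
  have hT : T.card ≤ s2 := (Set.ncard_eq_toFinset_card' _).symm.trans_le hy
  have hxS : Function.support x' ⊆ S := hsx.trans (by simp [S])
  have hyT : Function.support y' ⊆ T := hsy.trans (by simp [T])
  refine mem_iUnion.2 ⟨(⟨S, hS⟩, ⟨T, hT⟩), (fun i => x' i, fun j => y' j), ?_, ?_⟩
  · rw [mem_closedBall_zero_iff, norm_prod_le_iff]
    exact ⟨pi_norm_le_iff_of_nonneg zero_le_one |>.2 fun i => (norm_le_pi_norm x' i).trans hx',
      pi_norm_le_iff_of_nonneg zero_le_one |>.2 fun j => (norm_le_pi_norm y' j).trans hy'⟩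
  · ext p
    simp only [outerProductOn, extend_val_restrict hxS, extend_val_restrict hyT, hM' p]

theorem upper_minkowski_dim_sparse_rank_one_general (m1 m2 s1 s2 : ℕ) :
    upperMinkowskiDim {M : EuclideanSpace ℂ (Fin m1 × Fin m2) |
        ∃ x : Fin m1 → ℂ, ∃ y : Fin m2 → ℂ, l0 x ≤ s1 ∧ l0 y ≤ s2 ∧
          (∀ p : Fin m1 × Fin m2, M p = x p.1 * y p.2) ∧ ‖M‖ ≤ 1}
      ≤ 2 * ((s1 : ℝ) + s2) := by
  refine upperMinkowskiDim_le_of_isBigO (by positivity) ?_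
  refine isBigO_coveringNumber_of_subset (sparseRankOne_subset_iUnion s1 s2)
    (isCompact_iUnion fun ST => isCompact_image_outerProductOn _ _).totallyBounded ?_
  refine isBigO_coveringNumber_iUnion
    (fun ST => (isCompact_image_outerProductOn _ _).totallyBounded) fun ⟨⟨S, hS⟩, ⟨T, hT⟩⟩ => ?_
  refine (isBigO_coveringNumber_outerProductOn S T).trans (isBigO_rpow_neg_of_le ?_)
  have hS' : (S.card : ℝ) ≤ s1 := by exact_mod_cast hS
  have hT' : (T.card : ℝ) ≤ s2 := by exact_mod_cast hT
  linarith

/-- The set of rank-one matrices `x yᵀ` with `‖x‖₀ ≤ s1`, `‖y‖₀ ≤ s2` and `‖x yᵀ‖_F ≤ 1`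
has upper Minkowski dimension (w.r.t. the Frobenius norm) at most `2(s1 + s2)`. -/
theorem upper_minkowski_dim_sparse_rank_one (m1 m2 s1 s2 : ℕ)
    (hm1 : 0 < m1) (hm2 : 0 < m2) (hs1 : 0 < s1) (hs2 : 0 < s2)
    (hs1m : s1 ≤ m1) (hs2m : s2 ≤ m2) :
    upperMinkowskiDim {M : EuclideanSpace ℂ (Fin m1 × Fin m2) |
        ∃ x : Fin m1 → ℂ, ∃ y : Fin m2 → ℂ, l0 x ≤ s1 ∧ l0 y ≤ s2 ∧
          (∀ p : Fin m1 × Fin m2, M p = x p.1 * y p.2) ∧ ‖M‖ ≤ 1}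
      ≤ 2 * ((s1 : ℝ) + s2) :=
  upper_minkowski_dim_sparse_rank_one_general m1 m2 s1 s2
end
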